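/- arXiv:2007.09094 — 7 statements merged into one kernel-verified Lean document; each statement's English description precedes it below -/
import Mathlib

section
/- The function 𝕢 is convex on ℝ, i.e. for all x, y ∈ ℝ and all t ∈ [0,1], 𝕢(t·x + (1−t)·y) ≤ t·𝕢(x) + (1−t)·𝕢(y). -/
/-- The function 𝕢(x) = x·⌊x⌋ − (1/2)·⌊x⌋·(⌊x⌋ + 1). -/
noncomputable def qq (x : ℝ) : ℝ :=
  x * (⌊x⌋ : ℝ) - (1 / 2) * (⌊x⌋ : ℝ) * ((⌊x⌋ : ℝ) + 1)

lemma aff_le_qq (n : ℤ) (x : ℝ) : (n:ℝ) * x - (1/2) * n * (n+1) ≤ qq x := by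
  have h1 : (⌊x⌋ : ℝ) ≤ x := Int.floor_le x
  have h2 : x < (⌊x⌋ : ℝ) + 1 := Int.lt_floor_add_one x
  unfold qq
  rcases lt_trichotomy n ⌊x⌋ with h | h | h
  · have : (n:ℝ) + 1 ≤ (⌊x⌋ : ℝ) := by exact_mod_cast h
    nlinarith
  · subst h; nlinarith
  · have : (⌊x⌋ : ℝ) + 1 ≤ (n:ℝ) := by exact_mod_cast h
    nlinarith

theorem qq_convex :
    ∀ x y t : ℝ, t ∈ Set.Icc (0 : ℝ) 1 →
      qq (t * x + (1 - t) * y) ≤ t * qq x + (1 - t) * qq y := by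
  intro x y t ht
  obtain ⟨ht0, ht1⟩ := ht
  set z := t * x + (1 - t) * y with hz
  set n := ⌊z⌋ with hn
  have hx := aff_le_qq n x
  have hy := aff_le_qq n y
  have hqz : qq z = (n:ℝ) * z - (1/2) * n * (n+1) := by unfold qq; ring
  rw [hqz]
  have h1 : t * ((n:ℝ) * x - (1/2) * n * (n+1)) ≤ t * qq x :=
    mul_le_mul_of_nonneg_left hx ht0
  have h2 : (1 - t) * ((n:ℝ) * y - (1/2) * n * (n+1)) ≤ (1 - t) * qq y :=
    mul_le_mul_of_nonneg_left hy (by linarith)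
  nlinarith [h1, h2]
end

section
/- The function 𝕢 is its own Legendre transform up to a flip of sign: for every real number α, the value 𝕢(−α) is the greatest element of the set {α·x − 𝕢(x) : x ∈ ℝ}; that is, α·x − 𝕢(x) ≤ 𝕢(−α) for all x ∈ ℝ, and the value 𝕢(−α) is attained for some x ∈ ℝ. -/
/-- 𝕢 is its own Legendre transform up to a flip of sign:
𝕢(−α) is the greatest element of {α·x − 𝕢(x) : x ∈ ℝ}. -/
theorem qq_legendre (α : ℝ) :
    IsGreatest {y : ℝ | ∃ x : ℝ, y = α * x - qq x} (qq (-α)) := by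
  constructor
  · -- membership: attained at x = ⌊α⌋ + 1
    refine ⟨(⌊α⌋ : ℝ) + 1, ?_⟩
    have hfl : ⌊((⌊α⌋ : ℝ) + 1)⌋ = ⌊α⌋ + 1 := by
      rw [show ((⌊α⌋ : ℝ) + 1) = ((⌊α⌋ + 1 : ℤ) : ℝ) by push_cast; ring, Int.floor_intCast]
    have hneg : ⌊-α⌋ = -⌈α⌉ := Int.floor_neg
    by_cases h : ∃ n : ℤ, α = n
    · obtain ⟨n, rfl⟩ := h
      have h1 : ⌊(n : ℝ)⌋ = n := Int.floor_intCast n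
      have h2 : ⌈(n : ℝ)⌉ = n := Int.ceil_intCast n
      rw [h1] at hfl
      rw [h2] at hneg
      simp only [qq, hneg, h1, hfl]
      push_cast
      ring
    · have hne : ((⌊α⌋ : ℝ)) ≠ α := fun hc => h ⟨⌊α⌋, hc.symm⟩
      have hlt : ((⌊α⌋ : ℝ)) < α := lt_of_le_of_ne (Int.floor_le α) hne
      have hceil : ⌈α⌉ = ⌊α⌋ + 1 := by
        refine le_antisymm (Int.ceil_le.mpr ?_) ?_
        · push_cast
          linarith [Int.lt_floor_add_one α]
        · have := Int.lt_ceil.mpr hlt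
          omega
      rw [hceil] at hneg
      simp only [qq, hneg, hfl]
      push_cast
      ring
  · -- upper bound
    rintro y ⟨x, rfl⟩
    set m := ⌊x⌋ with hm
    set p := ⌊-α⌋ with hp
    have h1 : (m : ℝ) ≤ x := Int.floor_le x
    have h2 : x < (m : ℝ) + 1 := Int.lt_floor_add_one x
    have h3 : (p : ℝ) ≤ -α := Int.floor_le (-α)
    have h4 : -α < (p : ℝ) + 1 := Int.lt_floor_add_one (-α)
    simp only [qq]
    rcases le_or_gt 0 (m + p) with hs | hs
    · have hs' : (0 : ℤ) ≤ (m + p) * (m + p - 1) := by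
        rcases eq_or_lt_of_le hs with h | h
        · simp [← h]
        · exact mul_nonneg hs (by omega)
      have hs'' : (0 : ℝ) ≤ ((m : ℝ) + p) * ((m : ℝ) + p - 1) := by
        exact_mod_cast hs'
      have hs0 : (0 : ℝ) ≤ (m : ℝ) + p := by exact_mod_cast hs
      nlinarith [mul_nonneg (sub_nonneg.mpr h1) (by linarith : (0:ℝ) ≤ -α - p),
        mul_nonneg hs0 (sub_nonneg.mpr h1), mul_nonneg hs0 (by linarith : (0:ℝ) ≤ -α - p)]
    · have hs1 : m + p + 1 ≤ 0 := by omega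
      have hs' : (0 : ℤ) ≤ (m + p + 1) * (m + p + 2) := by
        rcases eq_or_lt_of_le hs1 with h | h
        · rw [h]; simp
        · nlinarith [mul_nonneg (by omega : (0:ℤ) ≤ -(m + p + 1)) (by omega : (0:ℤ) ≤ -(m + p + 2))]
      have hs'' : (0 : ℝ) ≤ ((m : ℝ) + p + 1) * ((m : ℝ) + p + 2) := by
        exact_mod_cast hs'
      have hs0 : (m : ℝ) + p + 1 ≤ 0 := by exact_mod_cast hs1
      nlinarith [mul_nonneg (by linarith : (0:ℝ) ≤ 1 - (x - m)) (by linarith : (0:ℝ) ≤ 1 - (-α - p)),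
        mul_nonneg (by linarith : (0:ℝ) ≤ -((m:ℝ) + p + 1))
          (by linarith : (0:ℝ) ≤ 2 - (x - m) - (-α - p))]
end

section
/- The epigraph of 𝕢 equals the convex hull of the lattice points above the half-integral parabola: {(x, y) ∈ ℝ × ℝ : y ≥ 𝕢(x)} = convexHull ℝ {(k, m) : k, m ∈ ℤ, m ≥ k·(k−1)/2}, as subsets of ℝ². -/
lemma int_consec_nonneg (a : ℤ) : 0 ≤ a * (a - 1) := by
  rcases le_or_gt a 0 with h | h
  · nlinarith
  · nlinarith

/-- Every tangent line lies below qq. -/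
lemma line_le_qq (n : ℤ) (x : ℝ) : (n : ℝ) * x - (n : ℝ) * ((n : ℝ) + 1) / 2 ≤ qq x := by
  have h1 : ((⌊x⌋ : ℤ) : ℝ) ≤ x := Int.floor_le x
  have h2 : x < ((⌊x⌋ : ℤ) : ℝ) + 1 := Int.lt_floor_add_one x
  set m : ℤ := ⌊x⌋ with hm
  unfold qq
  rw [← hm]
  rcases le_or_gt n m with h | h
  · have h3 : (0:ℝ) ≤ (m:ℝ) - n := by
      have : (n:ℝ) ≤ m := by exact_mod_cast h
      linarith
    have h4 : (0:ℝ) ≤ ((m:ℝ) - n) * (((m:ℝ) - n) - 1) := by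
      have := int_consec_nonneg (m - n)
      have : (0:ℝ) ≤ ((m - n : ℤ) : ℝ) * (((m - n : ℤ) : ℝ) - 1) := by
        exact_mod_cast this
      push_cast at this
      linarith [this]
    nlinarith [mul_nonneg h3 (by linarith : (0:ℝ) ≤ x - m)]
  · have h3 : (m:ℝ) - n ≤ -1 := by
      have : (m:ℝ) + 1 ≤ n := by exact_mod_cast h
      linarith
    have h4 : (0:ℝ) ≤ ((m:ℝ) - n) * (((m:ℝ) - n) + 1) := by
      have := int_consec_nonneg (m - n + 1)
      have : (0:ℝ) ≤ ((m - n + 1 : ℤ) : ℝ) * (((m - n + 1 : ℤ) : ℝ) - 1) := by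
        exact_mod_cast this
      push_cast at this
      nlinarith [this]
    have key : (0:ℝ) ≤ ((m:ℝ) - n) * (x - (m:ℝ) - 1) := by nlinarith
    nlinarith [key]

lemma qq_convex_s4 : Convex ℝ {p : ℝ × ℝ | p.2 ≥ qq p.1} := by
  rintro p hp q hq a b ha hb hab
  simp only [Set.mem_setOf_eq] at *
  set z : ℝ := a * p.1 + b * q.1 with hz
  have hfst : (a • p + b • q).1 = z := rfl
  have hsnd : (a • p + b • q).2 = a * p.2 + b * q.2 := rfl
  rw [hfst, hsnd]
  set n : ℤ := ⌊z⌋ with hn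
  have hqz : qq z = (n:ℝ) * z - (n:ℝ) * ((n:ℝ) + 1) / 2 := by
    unfold qq; rw [← hn]; ring
  have h1 : (n:ℝ) * p.1 - (n:ℝ) * ((n:ℝ) + 1) / 2 ≤ qq p.1 := line_le_qq n p.1
  have h2 : (n:ℝ) * q.1 - (n:ℝ) * ((n:ℝ) + 1) / 2 ≤ qq q.1 := line_le_qq n q.1
  have hp' : qq p.1 ≤ p.2 := hp
  have hq' : qq q.1 ≤ q.2 := hq
  have e1 : a * ((n:ℝ) * p.1 - (n:ℝ) * ((n:ℝ) + 1) / 2) ≤ a * p.2 :=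
    mul_le_mul_of_nonneg_left (le_trans h1 hp') ha
  have e2 : b * ((n:ℝ) * q.1 - (n:ℝ) * ((n:ℝ) + 1) / 2) ≤ b * q.2 :=
    mul_le_mul_of_nonneg_left (le_trans h2 hq') hb
  have : qq z = a * ((n:ℝ) * p.1 - (n:ℝ) * ((n:ℝ) + 1) / 2)
      + b * ((n:ℝ) * q.1 - (n:ℝ) * ((n:ℝ) + 1) / 2) := by
    rw [hqz, hz]
    linear_combination ((n:ℝ) * ((n:ℝ) + 1) / 2) * hab
  linarith [e1, e2, this ▸ (le_refl (qq z))]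

/-- The epigraph of 𝕢 is the convex hull of the lattice points above the
half-integral parabola. -/
theorem qq_epigraph_convexHull :
    {p : ℝ × ℝ | p.2 ≥ qq p.1} =
      convexHull ℝ {p : ℝ × ℝ |
        ∃ k m : ℤ, p = ((k : ℝ), (m : ℝ)) ∧ (m : ℝ) ≥ (k : ℝ) * ((k : ℝ) - 1) / 2} := by
  set S : Set (ℝ × ℝ) := {p : ℝ × ℝ |
      ∃ k m : ℤ, p = ((k : ℝ), (m : ℝ)) ∧ (m : ℝ) ≥ (k : ℝ) * ((k : ℝ) - 1) / 2} with hS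
  apply le_antisymm
  · -- epigraph ⊆ hull
    rintro ⟨x, y⟩ hxy
    simp only [Set.mem_setOf_eq] at hxy
    set n : ℤ := ⌊x⌋ with hn
    have hfl : ((n:ℤ):ℝ) ≤ x := Int.floor_le x
    have hfl2 : x < (n:ℝ) + 1 := Int.lt_floor_add_one x
    -- c = n(n-1)/2, d = n(n+1)/2 as integers
    obtain ⟨c, hc⟩ : Even ((n - 1) * n) := by
      have := Int.even_mul_succ_self (n - 1)
      simpa using this
    obtain ⟨d, hd⟩ : Even (n * (n + 1)) := Int.even_mul_succ_self n
    have hc' : ((n:ℝ) - 1) * n = c + c := by exact_mod_cast hc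
    have hd' : (n:ℝ) * ((n:ℝ) + 1) = d + d := by exact_mod_cast hd
    set M : ℤ := max (max ⌈y⌉ c) d with hM
    have hMy : y ≤ (M:ℝ) := le_trans (Int.le_ceil y)
      (by exact_mod_cast le_trans (le_max_left _ _) (le_max_left _ _))
    have hMc : (c:ℝ) ≤ M := by exact_mod_cast le_trans (le_max_right _ _) (le_max_left _ _)
    have hMd : (d:ℝ) ≤ M := by exact_mod_cast le_max_right _ _
    have hconv := convex_convexHull ℝ S
    have hp0 : ((n:ℝ), (c:ℝ)) ∈ convexHull ℝ S := subset_convexHull ℝ S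
      ⟨n, c, rfl, by nlinarith [hc']⟩
    have hp1 : (((n:ℝ) + 1), (d:ℝ)) ∈ convexHull ℝ S := subset_convexHull ℝ S
      ⟨n + 1, d, by push_cast; rfl, by push_cast; nlinarith [hd']⟩
    have hq0 : ((n:ℝ), (M:ℝ)) ∈ convexHull ℝ S := subset_convexHull ℝ S
      ⟨n, M, rfl, by nlinarith [hc', hMc]⟩
    have hq1 : (((n:ℝ) + 1), (M:ℝ)) ∈ convexHull ℝ S := subset_convexHull ℝ S
      ⟨n + 1, M, by push_cast; rfl, by push_cast; nlinarith [hd', hMd]⟩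
    set t : ℝ := x - n with ht
    have ht0 : 0 ≤ t := by linarith
    have ht1 : t ≤ 1 := by linarith
    have hqx : qq x = x * n - (n:ℝ) * ((n:ℝ) + 1) / 2 := by
      unfold qq; rw [← hn]; ring
    have hA : (x, qq x) ∈ convexHull ℝ S := by
      have := hconv hp0 hp1 (by linarith : (0:ℝ) ≤ 1 - t) ht0 (by ring)
      convert this using 1
      have h1 : (1 - t) * (n:ℝ) + t * ((n:ℝ) + 1) = x := by rw [ht]; ring
      have h2 : (1 - t) * (c:ℝ) + t * (d:ℝ) = qq x := by
        rw [hqx]; nlinarith [hc', hd']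
      simp [Prod.ext_iff, Prod.smul_def, smul_eq_mul]
      constructor
      · linarith [h1]
      · linarith [h2]
    have hB : (x, (M:ℝ)) ∈ convexHull ℝ S := by
      have := hconv hq0 hq1 (by linarith : (0:ℝ) ≤ 1 - t) ht0 (by ring)
      convert this using 1
      simp [Prod.ext_iff, Prod.smul_def, smul_eq_mul]
      constructor
      · rw [ht]; ring
      · ring
    rcases le_or_gt (M:ℝ) (qq x) with hle | hlt
    · have hy : y = qq x := le_antisymm (by linarith) hxy
      subst hy; exact hA
    · set s : ℝ := (y - qq x) / ((M:ℝ) - qq x) with hs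
      have hden : (0:ℝ) < (M:ℝ) - qq x := by linarith
      have hs0 : 0 ≤ s := div_nonneg (by linarith) (by linarith)
      have hs1 : s ≤ 1 := by
        rw [hs, div_le_one hden]; linarith
      have := hconv hA hB (by linarith : (0:ℝ) ≤ 1 - s) hs0 (by ring)
      convert this using 1
      simp [Prod.ext_iff, Prod.smul_def, smul_eq_mul]
      constructor
      · ring
      · have : s * ((M:ℝ) - qq x) = y - qq x := by
          rw [hs]; field_simp
        nlinarith [this]
  · -- hull ⊆ epigraph
    apply convexHull_min _ qq_convex_s4
    rintro p ⟨k, m, rfl, hkm⟩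
    simp only [Set.mem_setOf_eq]
    have hfk : ⌊((k:ℤ):ℝ)⌋ = k := Int.floor_intCast k
    unfold qq
    rw [hfk]
    nlinarith [hkm]
end

section
/- The linear map σ : ℝ³ → ℝ³ given by σ(n, k, m) = (n, k + n, m + k) preserves the open cone over the polyhedron Δ_𝕢: for all real n > 0 and all real k, m, if m ≥ n·𝕢(k/n) then m + k ≥ n·𝕢((k + n)/n). -/
lemma qq_add_one (x : ℝ) : qq (x + 1) = qq x + x := by
  have h : ⌊x + 1⌋ = ⌊x⌋ + 1 := by
    simp [Int.floor_add_intCast]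
  simp only [qq, h, Int.cast_add, Int.cast_one]
  ring

/-- The transformation σ(n,k,m) = (n, k+n, m+k) preserves the open cone over
the polyhedron Δ_𝕢 = {(x,y) : y ≥ 𝕢(x)}. -/
theorem sigma_preserves_cone :
    ∀ n k m : ℝ, n > 0 → m ≥ n * qq (k / n) → m + k ≥ n * qq ((k + n) / n) := by
  intro n k m hn h
  have hne : n ≠ 0 := ne_of_gt hn
  have h1 : (k + n) / n = k / n + 1 := by field_simp
  rw [h1, qq_add_one, mul_add, mul_div_cancel₀ _ hne]
  linarith
end

section
/- Let μ_1, …, μ_N ∈ ℤ^r be a finite collection of integer vectors that spans ℝ^r, and define 𝒬 : ℝ^r → ℝ by 𝒬(x) = Σ_i 𝕢(⟨μ_i, x⟩). Then 𝒬 is a convex function on ℝ^r, and 𝒬 is nondegenerate in the sense that every sublevel set {x ∈ ℝ^r : 𝒬(x) ≤ c} is bounded. -/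
open Set Bornology

lemma affine_le_qq (m : ℤ) (x : ℝ) : m * x - m * (m + 1) / 2 ≤ qq x := by
  have hx₀ : (⌊x⌋ : ℝ) ≤ x := Int.floor_le x
  have hx₁ : x < ⌊x⌋ + 1 := Int.lt_floor_add_one x
  have hm : (m : ℝ) + 1 ≤ ⌊x⌋ ∨ m = ⌊x⌋ ∨ (⌊x⌋ : ℝ) + 1 ≤ m := by
    rcases lt_trichotomy m ⌊x⌋ with h | h | h
    · exact .inl (by exact_mod_cast h)
    · exact .inr (.inl h)
    · exact .inr (.inr (by exact_mod_cast h))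
  unfold qq
  rcases hm with h | rfl | h
  · nlinarith
  · linarith
  · nlinarith

theorem convexOn_qq : ConvexOn ℝ univ qq := by
  refine ⟨convex_univ, fun x _ y _ a b ha hb hab => ?_⟩
  simp only [smul_eq_mul]
  unfold qq
  generalize ⌊a * x + b * y⌋ = m
  calc _ = a * (m * x - m * (m + 1) / 2) + b * (m * y - m * (m + 1) / 2) := by
        linear_combination (m * (m + 1) / 2 : ℝ) * hab
    _ ≤ a * qq x + b * qq y := by
        gcongr <;> exact affine_le_qq m _

lemma abs_sub_one_le_qq (x : ℝ) : |x| - 1 ≤ qq x := by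
  have h₁ := affine_le_qq 1 x
  have h₂ := affine_le_qq (-1) x
  push_cast at h₁ h₂
  rcases abs_cases x with ⟨h, -⟩ | ⟨h, -⟩ <;> linarith

theorem ConvexOn.fun_sum {𝕜 E β ι : Type*} [Semiring 𝕜] [PartialOrder 𝕜] [AddCommMonoid E]
    [AddCommMonoid β] [PartialOrder β] [IsOrderedAddMonoid β] [SMul 𝕜 E] [Module 𝕜 β] [PosSMulMono 𝕜 β]
    {s : Set E} (hs : Convex 𝕜 s) (t : Finset ι) {f : ι → E → β}
    (hf : ∀ i ∈ t, ConvexOn 𝕜 s (f i)) : ConvexOn 𝕜 s fun x => ∑ i ∈ t, f i x := by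
  classical
  induction t using Finset.induction_on with
  | empty => simpa using convexOn_const 0 hs
  | insert i t hi ih =>
    simp only [Finset.sum_insert hi]
    exact (hf i (t.mem_insert_self i)).add (ih fun j hj => hf j (Finset.mem_insert_of_mem hj))

theorem Matrix.mulVec_injective_of_span_eq_top {R m n : Type*} [CommRing R] [Fintype n] [DecidableEq n]
    (M : Matrix m n R) (hM : Submodule.span R (range M) = ⊤) : Function.Injective M.mulVec := by
  rw [← Matrix.coe_mulVecLin, ← LinearMap.ker_eq_bot, LinearMap.ker_eq_bot']
  intro x hx
  have hdual : dotProductEquiv R n x = 0 := by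
    refine LinearMap.ext_on_range hM fun i => ?_
    change x ⬝ᵥ M i = 0
    rw [dotProduct_comm]
    exact congrFun hx i
  simpa using hdual

theorem isBounded_setOf_sum_le_of_abs_sub_le {ι : Type*} [Fintype ι] {f : ℝ → ℝ} {b : ℝ}
    (hf : ∀ y, |y| - b ≤ f y) (c : ℝ) : IsBounded {y : ι → ℝ | ∑ i, f (y i) ≤ c} := by
  refine Metric.isBounded_closedBall (x := 0) (r := c + Fintype.card ι * b) |>.subset fun y hy => ?_
  have hsum : ∑ i, |y i| ≤ c + Fintype.card ι * b := by
    have := Finset.sum_le_sum fun i (_ : i ∈ Finset.univ) => hf (y i)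
    simp only [Finset.sum_sub_distrib, Finset.sum_const, Finset.card_univ, nsmul_eq_mul] at this
    linarith [hy.out]
  rw [Metric.mem_closedBall, dist_zero_right,
    pi_norm_le_iff_of_nonneg ((Finset.sum_nonneg fun i _ => abs_nonneg (y i)).trans hsum)]
  exact fun i => (Finset.single_le_sum (fun j _ => abs_nonneg (y j)) (Finset.mem_univ i)).trans hsum

/-- If the integer vectors μ_i span ℝ^r, then 𝒬(x) = Σ_i 𝕢(⟨μ_i, x⟩) is convex
and nondegenerate: every sublevel set is bounded. -/
theorem Q_convex_nondegenerate (r N : ℕ) (μ : Fin N → Fin r → ℤ)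
    (hspan : Submodule.span ℝ
      (Set.range fun i => fun j => ((μ i j : ℝ))) = (⊤ : Submodule ℝ (Fin r → ℝ))) :
    ConvexOn ℝ Set.univ (fun x : Fin r → ℝ => ∑ i, qq (∑ j, (μ i j : ℝ) * x j)) ∧
    ∀ c : ℝ, Bornology.IsBounded
      {x : Fin r → ℝ | (∑ i, qq (∑ j, (μ i j : ℝ) * x j)) ≤ c} := by
  set M : Matrix (Fin N) (Fin r) ℝ := fun i j => μ i j
  have hM : ∀ x i, ∑ j, (μ i j : ℝ) * x j = M.mulVec x i := fun _ _ => rfl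
  simp only [hM]
  constructor
  · refine ConvexOn.fun_sum convex_univ _ fun i _ => ?_
    exact convexOn_qq.comp_linearMap (LinearMap.proj i ∘ₗ M.mulVecLin)
  · intro c
    obtain ⟨K, -, hK⟩ := M.mulVecLin.injective_iff_antilipschitz.mp
      (M.mulVec_injective_of_span_eq_top hspan)
    exact hK.isBounded_preimage (isBounded_setOf_sum_le_of_abs_sub_le abs_sub_one_le_qq c)
end

section
/- Let R be a commutative ring and f, g ∈ R[ℤ^r] with g ≠ 0. Suppose that for every vertex v of the Newton polytope of f, the coefficient of f at v is a unit of R. Then the Newton polytope of f·g equals the Minkowski sum of the Newton polytope of f and the Newton polytope of g. -/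
open Pointwise

/-- The Newton polytope of a Laurent polynomial f ∈ R[ℤ^r]: the convex hull in
ℝ^r of the set of exponents with nonzero coefficient. -/
noncomputable def newtonPolytope {R : Type*} [CommRing R] {r : ℕ}
    (f : AddMonoidAlgebra R (Fin r → ℤ)) : Set (Fin r → ℝ) :=
  convexHull ℝ ((fun m : Fin r → ℤ => fun j => (m j : ℝ)) '' ↑f.coeff.support)

/-!
The inclusion `⊆` holds because `supp (f * g) ⊆ supp f + supp g`. Conversely, an extreme point `v`
of `P f + P g` lies in `supp f + supp g`, say `v = a + b`, and this splitting is unique even among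
points of `P f × P g`: from `a' + b' = a + b` the point `v` is the midpoint of `a' + b` and
`a + b'`. Translating by `b` also shows that `a` is a vertex of `P f`. Hence the coefficient of
`f * g` at `a + b` is `f a * g b`, which is nonzero because `f a` is a unit. So every vertex of the
polytope `P f + P g` is an exponent of `f * g`, and by Krein–Milman the polytope is the convex hull
of its vertices.
-/

open Set

section ExtremePointsAdd

variable {𝕜 E : Type*} [Field 𝕜] [LinearOrder 𝕜] [IsStrictOrderedRing 𝕜]
  [AddCommGroup E] [Module 𝕜 E] {s t : Set E} {x x' y y' : E}

theorem mem_extremePoints_of_add_mem_extremePoints_add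
    (hv : x + y ∈ (s + t).extremePoints 𝕜) (hx : x ∈ s) (hy : y ∈ t) :
    x ∈ s.extremePoints 𝕜 := by
  refine mem_extremePoints_iff_left.2 ⟨hx, fun x₁ hx₁ x₂ hx₂ hseg ↦ ?_⟩
  have hseg' : y + x ∈ openSegment 𝕜 (y + x₁) (y + x₂) := (mem_openSegment_translate 𝕜 y).2 hseg
  simp only [add_comm y] at hseg'
  exact add_right_cancel (hv.2 (add_mem_add hx₁ hy) (add_mem_add hx₂ hy) hseg')

theorem eq_and_eq_of_add_mem_extremePoints_add
    (hv : x + y ∈ (s + t).extremePoints 𝕜) (hx : x ∈ s) (hy : y ∈ t)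
    (hx' : x' ∈ s) (hy' : y' ∈ t) (h : x' + y' = x + y) : x' = x ∧ y' = y := by
  have hmid : x + y ∈ openSegment 𝕜 (x' + y) (x + y') := by
    refine ⟨1 / 2, 1 / 2, by norm_num, by norm_num, by norm_num, ?_⟩
    linear_combination (norm := module) (1 / 2 : 𝕜) • h
  obtain ⟨h₁, h₂⟩ := (mem_extremePoints.1 hv).2 _ (add_mem_add hx' hy) _ (add_mem_add hx hy') hmid
  exact ⟨add_right_cancel h₁, add_left_cancel h₂⟩

end ExtremePointsAdd

theorem Set.Finite.convexHull_extremePoints_convexHull {E : Type*} [AddCommGroup E] [Module ℝ E]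
    [TopologicalSpace E] [T2Space E] [IsTopologicalAddGroup E] [ContinuousSMul ℝ E]
    [LocallyConvexSpace ℝ E] {s : Set E} (hs : s.Finite) :
    convexHull ℝ ((convexHull ℝ s).extremePoints ℝ) = convexHull ℝ s := by
  have hfin : ((convexHull ℝ s).extremePoints ℝ).Finite := hs.subset extremePoints_convexHull_subset
  rw [← (hfin.isClosed_convexHull ℝ).closure_eq]
  exact closure_convexHull_extremePoints (hs.isCompact_convexHull ℝ) (convex_convexHull ℝ s)

section ConvexHullSupport

variable {R M 𝕜 E : Type*} [Semiring R] [AddMonoid M] [Field 𝕜] [LinearOrder 𝕜]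
  [IsStrictOrderedRing 𝕜] [AddCommGroup E] [Module 𝕜 E] (φ : M →+ E)

theorem convexHull_image_support_mul_subset (f g : AddMonoidAlgebra R M) :
    convexHull 𝕜 (φ '' (f * g).coeff.support) ⊆
      convexHull 𝕜 (φ '' f.coeff.support) + convexHull 𝕜 (φ '' g.coeff.support) := by
  classical
  rw [← convexHull_add, ← image_add]
  exact convexHull_mono <| image_mono <| by
    exact_mod_cast AddMonoidAlgebra.support_coeff_mul_subset f g

theorem extremePoints_convexHull_add_subset_image_support_mul (hφ : Function.Injective φ)
    (f g : AddMonoidAlgebra R M)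
    (hf : ∀ m, φ m ∈ (convexHull 𝕜 (φ '' f.coeff.support)).extremePoints 𝕜 → IsUnit (f.coeff m)) :
    (convexHull 𝕜 (φ '' f.coeff.support) + convexHull 𝕜 (φ '' g.coeff.support)).extremePoints 𝕜 ⊆
      φ '' (f * g).coeff.support := by
  intro v hv
  have mem_hull {p : AddMonoidAlgebra R M} {m : M} (hm : m ∈ p.coeff.support) :
      φ m ∈ convexHull 𝕜 (φ '' p.coeff.support) :=
    subset_convexHull 𝕜 _ (mem_image_of_mem φ hm)
  have hv_mem : v ∈ φ '' f.coeff.support + φ '' g.coeff.support :=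
    extremePoints_convexHull_subset (by rwa [convexHull_add (R := 𝕜)])
  obtain ⟨_, ⟨a, ha, rfl⟩, _, ⟨b, hb, rfl⟩, rfl⟩ := hv_mem
  have hunique : UniqueAdd f.coeff.support g.coeff.support a b := by
    intro a' b' ha' hb' hab
    have := eq_and_eq_of_add_mem_extremePoints_add hv (mem_hull ha) (mem_hull hb)
      (mem_hull ha') (mem_hull hb') (by rw [← map_add, ← map_add, hab])
    exact ⟨hφ this.1, hφ this.2⟩
  have hunit : IsUnit (f.coeff a) :=
    hf a (mem_extremePoints_of_add_mem_extremePoints_add hv (mem_hull ha) (mem_hull hb))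
  refine ⟨a + b, ?_, map_add φ a b⟩
  rw [Finset.mem_coe, Finsupp.mem_support_iff, AddMonoidAlgebra.coeff_mul_add_of_uniqueAdd hunique,
    Ne, hunit.mul_right_eq_zero]
  exact Finsupp.mem_support_iff.1 hb

end ConvexHullSupport

theorem convexHull_image_support_mul {R M E : Type*} [Semiring R] [AddMonoid M] [AddCommGroup E]
    [Module ℝ E] [TopologicalSpace E] [T2Space E] [IsTopologicalAddGroup E] [ContinuousSMul ℝ E]
    [LocallyConvexSpace ℝ E] (φ : M →+ E) (hφ : Function.Injective φ) (f g : AddMonoidAlgebra R M)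
    (hf : ∀ m, φ m ∈ (convexHull ℝ (φ '' f.coeff.support)).extremePoints ℝ → IsUnit (f.coeff m)) :
    convexHull ℝ (φ '' (f * g).coeff.support) =
      convexHull ℝ (φ '' f.coeff.support) + convexHull ℝ (φ '' g.coeff.support) := by
  refine (convexHull_image_support_mul_subset φ f g).antisymm ?_
  have hfin : (φ '' f.coeff.support + φ '' g.coeff.support).Finite :=
    (f.coeff.support.finite_toSet.image φ).add (g.coeff.support.finite_toSet.image φ)
  calc convexHull ℝ (φ '' f.coeff.support) + convexHull ℝ (φ '' g.coeff.support)
      = convexHull ℝ ((convexHull ℝ (φ '' f.coeff.support) +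
          convexHull ℝ (φ '' g.coeff.support)).extremePoints ℝ) := by
        rw [← convexHull_add, hfin.convexHull_extremePoints_convexHull]
    _ ⊆ convexHull ℝ (φ '' (f * g).coeff.support) :=
        convexHull_mono (extremePoints_convexHull_add_subset_image_support_mul φ hφ f g hf)

theorem newtonPolytope_mul_general {R : Type*} [CommRing R] {r : ℕ}
    (f g : AddMonoidAlgebra R (Fin r → ℤ))
    (hf : ∀ m : Fin r → ℤ,
      (fun j => (m j : ℝ)) ∈ Set.extremePoints ℝ (newtonPolytope f) →
      IsUnit (f.coeff m)) :
    newtonPolytope (f * g) = newtonPolytope f + newtonPolytope g :=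
  convexHull_image_support_mul ((Int.castAddHom ℝ).compLeft (Fin r))
    (fun _ _ h ↦ funext fun j ↦ Int.cast_injective (congrFun h j)) f g hf

/-- If the coefficient of f at every vertex (extreme point) of its Newton
polytope is a unit and g ≠ 0, then the Newton polytope of f·g is the Minkowski
sum of those of f and g. -/
theorem newtonPolytope_mul {R : Type*} [CommRing R] {r : ℕ}
    (f g : AddMonoidAlgebra R (Fin r → ℤ)) (hg : g ≠ 0)
    (hf : ∀ m : Fin r → ℤ,
      (fun j => (m j : ℝ)) ∈ Set.extremePoints ℝ (newtonPolytope f) →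
      IsUnit (f.coeff m)) :
    newtonPolytope (f * g) = newtonPolytope f + newtonPolytope g :=
  newtonPolytope_mul_general f g hf
end

section
/- Let R be a commutative ring and consider the polynomial ring R[t, s] in two variables. The set A = {f ∈ R[t, s] : f(T, 0) = f(0, T) in R[T]} (where f(T,0) and f(0,T) denote the one-variable polynomials obtained by the substitutions s = 0 and t = 0, T being the remaining variable) is an R-subalgebra of R[t, s], and it is generated as an R-algebra by the three elements f₁ = t + s, f₂ = t·s, and f₃ = t²·s; that is, A = Algebra.adjoin R {t + s, t·s, t²·s}. -/
open MvPolynomial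

/-! Write `t = X 0`, `s = X 1` and `A` for the subalgebra generated by `t + s`, `ts`, `t²s`.
If `f(T, 0) = f(0, T) = P(T)`, then `f - (P(t) + P(s) - P(0))` vanishes on both axes, so only
monomials `tᵃsᵇ` with `a, b ≥ 1` occur in it. Such a monomial is a power of `ts` times `tⁿs` or
`tsⁿ`, and these, like the power sums `tⁿ + sⁿ`, satisfy `uₙ₊₂ = (t + s) uₙ₊₁ - ts uₙ`, so they
lie in `A` by induction. -/

theorem mul_pow_add_mul_pow_mem {B σ : Type*} [CommRing B] [SetLike σ B] [SubringClass σ B]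
    {S : σ} {x y u v : B} (hs : x + y ∈ S) (hp : x * y ∈ S) (h₀ : u + v ∈ S)
    (h₁ : u * x + v * y ∈ S) (n : ℕ) : u * x ^ n + v * y ^ n ∈ S := by
  induction n using Nat.twoStepInduction with
  | zero => simpa using h₀
  | one => simpa using h₁
  | more n ih₀ ih₁ =>
    have hrec : u * x ^ (n + 2) + v * y ^ (n + 2) =
        (x + y) * (u * x ^ (n + 1) + v * y ^ (n + 1)) - x * y * (u * x ^ n + v * y ^ n) := by
      ring
    rw [hrec]
    exact sub_mem (mul_mem hs ih₁) (mul_mem hp ih₀)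

namespace MvPolynomial

variable {R : Type*} [CommRing R]

theorem coeff_aeval_X_zero (f : MvPolynomial (Fin 2) R) (n : ℕ) :
    (aeval ![Polynomial.X, 0] f).coeff n = f.coeff (Finsupp.single 0 n) := by
  induction f using MvPolynomial.induction_on' with
  | monomial d c =>
    have hd : d = Finsupp.single 0 n ↔ d 0 = n ∧ d 1 = 0 := by
      simp [Finsupp.ext_iff, Fin.forall_fin_two, eq_comm]
    rw [aeval_monomial, Finsupp.prod_pow, Fin.prod_univ_two, coeff_monomial]
    simp only [hd]
    rcases eq_or_ne (d 1) 0 with h | h <;> simp [h, Polynomial.coeff_X_pow, eq_comm]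
  | add p q hp hq => simp [hp, hq]

theorem coeff_aeval_zero_X (f : MvPolynomial (Fin 2) R) (n : ℕ) :
    (aeval ![0, Polynomial.X] f).coeff n = f.coeff (Finsupp.single 1 n) := by
  induction f using MvPolynomial.induction_on' with
  | monomial d c =>
    have hd : d = Finsupp.single 1 n ↔ d 1 = n ∧ d 0 = 0 := by
      simp [Finsupp.ext_iff, Fin.forall_fin_two, eq_comm, and_comm]
    rw [aeval_monomial, Finsupp.prod_pow, Fin.prod_univ_two, coeff_monomial]
    simp only [hd]
    rcases eq_or_ne (d 0) 0 with h | h <;> simp [h, Polynomial.coeff_X_pow, eq_comm]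
  | add p q hp hq => simp [hp, hq]

theorem support_mixed_of_aeval_eq_zero {f : MvPolynomial (Fin 2) R}
    (h₀ : aeval ![(Polynomial.X : Polynomial R), 0] f = 0)
    (h₁ : aeval ![0, (Polynomial.X : Polynomial R)] f = 0)
    {d : Fin 2 →₀ ℕ} (hd : d ∈ f.support) : d 0 ≠ 0 ∧ d 1 ≠ 0 := by
  rw [mem_support_iff] at hd
  constructor
  · intro hd₀
    have : d = Finsupp.single 1 (d 1) := by ext i; fin_cases i <;> simp [hd₀]
    rw [this, ← coeff_aeval_zero_X, h₁, Polynomial.coeff_zero] at hd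
    exact hd rfl
  · intro hd₁
    have : d = Finsupp.single 0 (d 0) := by ext i; fin_cases i <;> simp [hd₁]
    rw [this, ← coeff_aeval_X_zero, h₀, Polynomial.coeff_zero] at hd
    exact hd rfl

noncomputable def nodalSubalgebra (R : Type*) [CommRing R] :
    Subalgebra R (MvPolynomial (Fin 2) R) :=
  Algebra.adjoin R {X 0 + X 1, X 0 * X 1, X 0 ^ 2 * X 1}

namespace nodalSubalgebra

noncomputable def lift (P : Polynomial R) : MvPolynomial (Fin 2) R :=
  Polynomial.aeval (X 0) P + Polynomial.aeval (X 1) P - C (P.coeff 0)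

theorem aeval_lift_X_zero (P : Polynomial R) :
    aeval ![(Polynomial.X : Polynomial R), 0] (lift P) = P := by
  simp [lift, ← Polynomial.aeval_algHom_apply, ← Polynomial.coeff_zero_eq_aeval_zero']

theorem aeval_lift_zero_X (P : Polynomial R) :
    aeval ![0, (Polynomial.X : Polynomial R)] (lift P) = P := by
  simp [lift, ← Polynomial.aeval_algHom_apply, ← Polynomial.coeff_zero_eq_aeval_zero']

theorem X_add_X_mem : (X 0 + X 1 : MvPolynomial (Fin 2) R) ∈ nodalSubalgebra R :=
  Algebra.subset_adjoin (by simp)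

theorem X_mul_X_mem : (X 0 * X 1 : MvPolynomial (Fin 2) R) ∈ nodalSubalgebra R :=
  Algebra.subset_adjoin (by simp)

theorem X_sq_mul_X_mem : (X 0 ^ 2 * X 1 : MvPolynomial (Fin 2) R) ∈ nodalSubalgebra R :=
  Algebra.subset_adjoin (by simp)

theorem X_mul_X_sq_mem : (X 0 * X 1 ^ 2 : MvPolynomial (Fin 2) R) ∈ nodalSubalgebra R := by
  rw [show (X 0 * X 1 ^ 2 : MvPolynomial (Fin 2) R) = (X 0 + X 1) * (X 0 * X 1) - X 0 ^ 2 * X 1 by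
    ring]
  exact sub_mem (mul_mem X_add_X_mem X_mul_X_mem) X_sq_mul_X_mem

theorem X_pow_add_X_pow_mem (n : ℕ) :
    (X 0 ^ n + X 1 ^ n : MvPolynomial (Fin 2) R) ∈ nodalSubalgebra R := by
  simpa using mul_pow_add_mul_pow_mem (u := 1) (v := 1) X_add_X_mem X_mul_X_mem
    (add_mem (one_mem _) (one_mem _)) (by simpa using X_add_X_mem) n

theorem X_pow_succ_mul_X_mem (n : ℕ) :
    (X 0 ^ (n + 1) * X 1 : MvPolynomial (Fin 2) R) ∈ nodalSubalgebra R := by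
  have h := mul_pow_add_mul_pow_mem (S := nodalSubalgebra R) (u := X 0 * X 1) (v := 0)
    X_add_X_mem X_mul_X_mem (by simpa using X_mul_X_mem)
    (by simpa [sq, mul_right_comm] using X_sq_mul_X_mem) n
  convert h using 1
  ring

theorem X_mul_X_pow_succ_mem (n : ℕ) :
    (X 0 * X 1 ^ (n + 1) : MvPolynomial (Fin 2) R) ∈ nodalSubalgebra R := by
  have h := mul_pow_add_mul_pow_mem (S := nodalSubalgebra R) (u := 0) (v := X 0 * X 1)
    X_add_X_mem X_mul_X_mem (by simpa using X_mul_X_mem)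
    (by simpa [sq, mul_assoc] using X_mul_X_sq_mem) n
  convert h using 1
  ring

theorem X_pow_succ_mul_X_pow_succ_mem (a b : ℕ) :
    (X 0 ^ (a + 1) * X 1 ^ (b + 1) : MvPolynomial (Fin 2) R) ∈ nodalSubalgebra R := by
  rcases le_total a b with h | h
  · obtain ⟨c, rfl⟩ := Nat.exists_eq_add_of_le h
    rw [show (X 0 ^ (a + 1) * X 1 ^ (a + c + 1) : MvPolynomial (Fin 2) R) =
        (X 0 * X 1) ^ a * (X 0 * X 1 ^ (c + 1)) by ring]
    exact mul_mem (pow_mem X_mul_X_mem a) (X_mul_X_pow_succ_mem c)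
  · obtain ⟨c, rfl⟩ := Nat.exists_eq_add_of_le h
    rw [show (X 0 ^ (b + c + 1) * X 1 ^ (b + 1) : MvPolynomial (Fin 2) R) =
        (X 0 * X 1) ^ b * (X 0 ^ (c + 1) * X 1) by ring]
    exact mul_mem (pow_mem X_mul_X_mem b) (X_pow_succ_mul_X_mem c)

theorem monomial_mem {d : Fin 2 →₀ ℕ} (hd₀ : d 0 ≠ 0) (hd₁ : d 1 ≠ 0) (c : R) :
    monomial d c ∈ nodalSubalgebra R := by
  obtain ⟨a, ha⟩ := Nat.exists_eq_succ_of_ne_zero hd₀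
  obtain ⟨b, hb⟩ := Nat.exists_eq_succ_of_ne_zero hd₁
  rw [monomial_eq, Finsupp.prod_pow, Fin.prod_univ_two, ha, hb]
  exact mul_mem (algebraMap_mem _ c) (X_pow_succ_mul_X_pow_succ_mem a b)

theorem mem_of_aeval_eq_zero {f : MvPolynomial (Fin 2) R}
    (h₀ : aeval ![(Polynomial.X : Polynomial R), 0] f = 0)
    (h₁ : aeval ![0, (Polynomial.X : Polynomial R)] f = 0) : f ∈ nodalSubalgebra R := by
  rw [f.as_sum]
  refine sum_mem fun d hd => ?_
  obtain ⟨hd₀, hd₁⟩ := support_mixed_of_aeval_eq_zero h₀ h₁ hd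
  exact monomial_mem hd₀ hd₁ _

theorem lift_mem (P : Polynomial R) : lift P ∈ nodalSubalgebra R := by
  refine sub_mem ?_ (algebraMap_mem _ _)
  rw [Polynomial.aeval_eq_sum_range, Polynomial.aeval_eq_sum_range, ← Finset.sum_add_distrib]
  refine sum_mem fun k _ => ?_
  rw [← smul_add]
  exact Subalgebra.smul_mem _ (X_pow_add_X_pow_mem k) _

theorem le_equalizer :
    nodalSubalgebra R ≤ AlgHom.equalizer (aeval ![(Polynomial.X : Polynomial R), 0])
      (aeval ![0, (Polynomial.X : Polynomial R)]) := by
  rw [nodalSubalgebra, Algebra.adjoin_le_iff]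
  rintro x (rfl | rfl | rfl) <;> simp

theorem mem_of_aeval_eq {f : MvPolynomial (Fin 2) R}
    (h : aeval ![(Polynomial.X : Polynomial R), 0] f = aeval ![0, Polynomial.X] f) :
    f ∈ nodalSubalgebra R := by
  set P := aeval ![(Polynomial.X : Polynomial R), 0] f
  rw [← sub_add_cancel f (lift P)]
  refine add_mem (mem_of_aeval_eq_zero ?_ ?_) (lift_mem P)
  · rw [map_sub, aeval_lift_X_zero, sub_self]
  · rw [map_sub, aeval_lift_zero_X, ← h, sub_self]

end nodalSubalgebra

end MvPolynomial

/-- The homogeneous coordinate ring of ℙ¹ with 0 and ∞ identified: the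
subalgebra {f ∈ R[t,s] : f(T,0) = f(0,T)} of R[t,s] is generated over R by
t + s, t·s and t²·s. -/
theorem nodal_P1_coordinate_ring (R : Type*) [CommRing R] :
    {f : MvPolynomial (Fin 2) R |
        MvPolynomial.aeval ![(Polynomial.X : Polynomial R), 0] f =
          MvPolynomial.aeval ![0, (Polynomial.X : Polynomial R)] f} =
      (Algebra.adjoin R
        {(X 0 + X 1 : MvPolynomial (Fin 2) R), X 0 * X 1, (X 0) ^ 2 * X 1} :
        Subalgebra R (MvPolynomial (Fin 2) R)) := by
  ext f
  exact ⟨nodalSubalgebra.mem_of_aeval_eq, fun hf => nodalSubalgebra.le_equalizer hf⟩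
end
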